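/- The bound state Y_λ(η) = 1/(2cosh(λη)) is orthogonal in L²(ℝ) to each continuous-spectrum eigenfunction Y(n,·): ∫_{−∞}^{∞} Y_λ(η) · conj(Y(n,η)) dη = 0 for every real n ≠ 0. -/

import Mathlib

/-!
Up to the constant factor `(i n + λ)⁻¹`, the product `Y_λ(η) · conj Y(n, η)` is the derivative of
`e^{inη} / (2 cosh λη)`. That function and its derivative are both dominated by a multiple of
`1 / cosh λη ≤ 1 / (1 + (λη)² / 2)`, hence integrable over `ℝ`, so the integral of the
derivative vanishes.
-/

open MeasureTheory Complex

lemma Real.one_add_sq_div_two_le_cosh (t : ℝ) : 1 + t ^ 2 / 2 ≤ Real.cosh t := by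
  have sq_le_sinh_sq : (t / 2) ^ 2 ≤ Real.sinh (t / 2) ^ 2 := by
    rcases le_total 0 (t / 2) with h | h
    · nlinarith [Real.self_le_sinh_iff.2 h]
    · nlinarith [Real.sinh_le_self_iff.2 h]
  have : Real.cosh t = 1 + 2 * Real.sinh (t / 2) ^ 2 := by
    conv_lhs => rw [← mul_div_cancel₀ t two_ne_zero, Real.cosh_two_mul, Real.cosh_sq]
    ring
  linarith

lemma Real.abs_tanh_le_one (x : ℝ) : |Real.tanh x| ≤ 1 :=
  abs_le.2 <| Set.Ioo_subset_Icc_self (Real.tanh_bijOn.mapsTo (Set.mem_univ x))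

@[fun_prop]
lemma Real.continuous_tanh : Continuous Real.tanh := by
  rw [funext Real.tanh_eq_sinh_div_cosh]
  exact Real.continuous_sinh.div Real.continuous_cosh fun x => (Real.cosh_pos x).ne'

lemma integrable_inv_two_mul_cosh_mul {lam : ℝ} (hlam : lam ≠ 0) :
    Integrable fun η : ℝ => (2 * Real.cosh (lam * η))⁻¹ := by
  refine (integrable_inv_one_add_sq.comp_mul_left' hlam).mono' (by fun_prop) ?_
  refine .of_forall fun η => ?_
  have := Real.one_add_sq_div_two_le_cosh (lam * η)
  rw [Real.norm_of_nonneg (by positivity)]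
  gcongr
  nlinarith [sq_nonneg (lam * η)]

noncomputable def sechWave (lam n η : ℝ) : ℂ :=
  cexp (I * n * η) / ((2 * Real.cosh (lam * η) : ℝ) : ℂ)

section sechWave

variable (lam n : ℝ)

lemma norm_sechWave (η : ℝ) : ‖sechWave lam n η‖ = (2 * Real.cosh (lam * η))⁻¹ := by
  rw [sechWave, norm_div, norm_exp, norm_real, Real.norm_of_nonneg (by positivity)]
  simp

lemma continuous_sechWave : Continuous (sechWave lam n) := by
  refine Continuous.div (by fun_prop) (by fun_prop) fun η => ?_
  exact_mod_cast (by positivity : 2 * Real.cosh (lam * η) ≠ 0)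

lemma hasDerivAt_sechWave (η : ℝ) :
    HasDerivAt (sechWave lam n)
      ((I * n - (lam * Real.tanh (lam * η) : ℝ)) * sechWave lam n η) η := by
  have hexp : HasDerivAt (fun η : ℝ => cexp (I * n * η)) (I * n * cexp (I * n * η)) η := by
    simpa [mul_comm] using ((ofRealCLM.hasDerivAt (x := η)).const_mul (I * n)).cexp
  have hcosh : HasDerivAt (fun η : ℝ => ((2 * Real.cosh (lam * η) : ℝ) : ℂ))
      ((2 * (Real.sinh (lam * η) * lam) : ℝ) : ℂ) η :=
    (((Real.hasDerivAt_cosh _).comp η ((hasDerivAt_id η).const_mul lam)).const_mul 2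
      |>.congr_deriv (by simp)).ofReal_comp
  have hne : ((2 * Real.cosh (lam * η) : ℝ) : ℂ) ≠ 0 := by
    exact_mod_cast (by positivity : 2 * Real.cosh (lam * η) ≠ 0)
  have hcosh_ne : Complex.cosh (η * lam) ≠ 0 := by
    exact_mod_cast (Real.cosh_pos (η * lam)).ne'
  refine (hexp.div hcosh hne).congr_deriv ?_
  rw [sechWave, Real.tanh_eq_sinh_div_cosh]
  push_cast
  field_simp

variable {lam}

lemma integrable_sechWave (hlam : lam ≠ 0) : Integrable (sechWave lam n) :=
  (integrable_inv_two_mul_cosh_mul hlam).mono' (continuous_sechWave lam n).aestronglyMeasurable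
    (.of_forall fun η => (norm_sechWave lam n η).le)

lemma integrable_deriv_sechWave (hlam : lam ≠ 0) :
    Integrable fun η : ℝ => (I * n - (lam * Real.tanh (lam * η) : ℝ)) * sechWave lam n η := by
  refine (integrable_sechWave n hlam).bdd_mul (c := |n| + |lam|)
    (by fun_prop : Continuous _).aestronglyMeasurable ?_
  refine .of_forall fun η => (norm_sub_le _ _).trans ?_
  have := Real.abs_tanh_le_one (lam * η)
  simp only [norm_mul, norm_I, norm_real, Real.norm_eq_abs, one_mul]
  gcongr
  nlinarith [abs_nonneg lam]

lemma integral_deriv_sechWave (hlam : lam ≠ 0) :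
    ∫ η : ℝ, (I * n - (lam * Real.tanh (lam * η) : ℝ)) * sechWave lam n η = 0 :=
  integral_eq_zero_of_hasDerivAt_of_integrable (hasDerivAt_sechWave lam n)
    (integrable_deriv_sechWave n hlam) (integrable_sechWave n hlam)

end sechWave

noncomputable def boundState (lam η : ℝ) : ℂ := ((1 / (2 * Real.cosh (lam * η)) : ℝ) : ℂ)

noncomputable def scatteringState (lam n η : ℝ) : ℂ :=
  (lam * Real.tanh (lam * η) + I * n) / (I * n - lam) * cexp (-I * n * η)

lemma boundState_mul_conj_scatteringState {lam : ℝ} (hlam : lam ≠ 0) (n η : ℝ) :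
    boundState lam η * starRingEnd ℂ (scatteringState lam n η) =
      (I * n + lam)⁻¹ * ((I * n - (lam * Real.tanh (lam * η) : ℝ)) * sechWave lam n η) := by
  have hcosh_ne : Complex.cosh (lam * η) ≠ 0 := by
    exact_mod_cast (Real.cosh_pos (lam * η)).ne'
  have hden_ne : I * n + lam ≠ 0 := fun h => hlam (by simpa using congrArg re h)
  have hden_ne' : -(I * n) - lam ≠ 0 := fun h => hden_ne (by linear_combination -h)
  simp only [boundState, scatteringState, sechWave, map_mul, map_div₀, map_add, map_sub, map_neg,
    conj_I, conj_ofReal, ← exp_conj, neg_mul, neg_neg]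
  push_cast
  field_simp
  ring

theorem stmt_12_general (lam n : ℝ) (hlam : 0 < lam)
    (Y : ℝ → ℂ)
    (hY : Y = fun (η : ℝ) =>
      ((lam * Real.tanh (lam * η) + Complex.I * n) / (Complex.I * n - lam)) *
        Complex.exp (-Complex.I * n * η))
    (Ylam : ℝ → ℂ) (hYlam : Ylam = fun (η : ℝ) => ((1 / (2 * Real.cosh (lam * η)) : ℝ) : ℂ)) :
    ∫ η : ℝ, Ylam η * starRingEnd ℂ (Y η) = 0 := by
  subst hY hYlam
  change ∫ η : ℝ, boundState lam η * starRingEnd ℂ (scatteringState lam n η) = 0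
  simp_rw [boundState_mul_conj_scatteringState hlam.ne', integral_const_mul,
    integral_deriv_sechWave n hlam.ne', mul_zero]

theorem stmt_12 (lam n : ℝ) (hlam : 0 < lam) (hn : n ≠ 0)
    (Y : ℝ → ℂ)
    (hY : Y = fun (η : ℝ) =>
      ((lam * Real.tanh (lam * η) + Complex.I * n) / (Complex.I * n - lam)) *
        Complex.exp (-Complex.I * n * η))
    (Ylam : ℝ → ℂ) (hYlam : Ylam = fun (η : ℝ) => ((1 / (2 * Real.cosh (lam * η)) : ℝ) : ℂ)) :
    ∫ η : ℝ, Ylam η * starRingEnd ℂ (Y η) = 0 :=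
  stmt_12_general lam n hlam Y hY Ylam hYlam
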